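/- arXiv:math/0507471 — 7 statements merged into one kernel-verified Lean document; each statement's English description precedes it below -/
import Mathlib

section
/- If Q(x,y) is a homogeneous polynomial of degree k with ∫₀^{2π} Q(cos θ, sin θ) dθ = 0, and R(ρ) = Σ_{i=0}^m a_i ρ^{2i}, then any solution ρ(θ) of the ODE dρ/dθ = ρ^{k+1} Q(cos θ, sin θ) R(ρ) with sufficiently small positive initial value ρ(0) = ρ₀ is defined on [0, 2π] and is 2π-periodic, i.e., ρ(2π) = ρ(0). -/
open Real MvPolynomial Set Filter Topology

/-!
The equation is separable: wherever `h(ρ) = ρ^(k+1) R(ρ)` does not vanish, a solution satisfies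
`∫_{ρ(0)}^{ρ(θ)} dx / h(x) = ∫_0^θ Q(cos t, sin t) dt`, and the right-hand side vanishes at
`θ = 2π`. Unless `R = 0` (a trivial case), `R` is a nonzero polynomial, so `h` has constant sign
on some `(0, δ)` and `|h(x)| ≤ C x` there. This linear bound makes `ρ₀ e^{±Lθ}` barriers, so a
solution starting at a small `ρ₀ > 0` stays in a compact subinterval of `(0, δ)` up to `θ = 2π`.
There `1 / h` has constant sign, so its integral from `ρ(0)` to `ρ(2π)` vanishes only if
`ρ(2π) = ρ(0)`.
-/

theorem mem_Icc_mul_exp_of_abs_deriv_lt {ρ f : ℝ → ℝ} {L T : ℝ} (hL : 0 ≤ L) (hρ₀ : 0 ≤ ρ 0)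
    (hρ : ∀ θ ∈ Icc 0 T, HasDerivAt ρ (f θ) θ)
    (hf : ∀ θ ∈ Ico 0 T,
      ρ θ ∈ Icc (ρ 0 * exp (-(L * T))) (ρ 0 * exp (L * T)) → |f θ| < L * ρ θ) :
    ∀ θ ∈ Icc 0 T, ρ θ ∈ Icc (ρ 0 * exp (-(L * T))) (ρ 0 * exp (L * T)) := by
  have hbarrier : ∀ σ, |σ| ≤ L → ∀ θ ∈ Icc 0 T,
      ρ 0 * exp (σ * θ) ∈ Icc (ρ 0 * exp (-(L * T))) (ρ 0 * exp (L * T)) := by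
    intro σ hσ θ hθ
    have hσθ : |σ * θ| ≤ L * T := by
      rw [abs_mul, abs_of_nonneg hθ.1]
      exact mul_le_mul hσ hθ.2 hθ.1 hL
    constructor <;> refine mul_le_mul_of_nonneg_left (exp_le_exp.2 ?_) hρ₀ <;>
      linarith [abs_le.1 hσθ]
  have hLL : |L| ≤ L := (abs_of_nonneg hL).le
  have hnegL : |-L| ≤ L := (abs_neg L).trans_le hLL
  have hcont : ContinuousOn ρ (Icc 0 T) := fun θ hθ => (hρ θ hθ).continuousAt.continuousWithinAt
  have hρ' : ∀ θ ∈ Ico 0 T, HasDerivWithinAt ρ (f θ) (Ici θ) θ := fun θ hθ =>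
    (hρ θ (Ico_subset_Icc_self hθ)).hasDerivWithinAt
  have hexp : ∀ σ θ, HasDerivAt (fun t => ρ 0 * exp (σ * t)) (σ * (ρ 0 * exp (σ * θ))) θ :=
    fun σ θ => (((hasDerivAt_id' θ).const_mul σ).exp.const_mul (ρ 0)).congr_deriv (by ring)
  have hupper : ∀ θ ∈ Icc 0 T, ρ θ ≤ ρ 0 * exp (L * θ) :=
    image_le_of_deriv_right_lt_deriv_boundary' hcont hρ' (by simp)
      (fun θ _ => (hexp L θ).continuousAt.continuousWithinAt)
      (fun θ _ => (hexp L θ).hasDerivWithinAt) fun θ hθ heq => by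
        have := hf θ hθ (heq ▸ hbarrier L hLL θ (Ico_subset_Icc_self hθ))
        rw [← heq]
        exact (le_abs_self _).trans_lt this
  have hlower : ∀ θ ∈ Icc 0 T, -ρ θ ≤ -(ρ 0 * exp (-L * θ)) :=
    image_le_of_deriv_right_lt_deriv_boundary' hcont.neg (fun θ hθ => (hρ' θ hθ).neg) (by simp)
      (fun θ _ => (hexp (-L) θ).neg.continuousAt.continuousWithinAt)
      (fun θ _ => (hexp (-L) θ).neg.hasDerivWithinAt) fun θ hθ heq => by
        simp only [Pi.neg_apply, neg_inj] at heq
        have := hf θ hθ (heq ▸ hbarrier (-L) hnegL θ (Ico_subset_Icc_self hθ))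
        rw [heq] at this
        linarith [neg_abs_le (f θ)]
  intro θ hθ
  constructor
  · linarith [(hbarrier (-L) hnegL θ hθ).1, hlower θ hθ]
  · exact (hupper θ hθ).trans (hbarrier L hLL θ hθ).2

theorem integral_inv_eq_integral_of_hasDerivAt_mul {H g ρ : ℝ → ℝ} {a b : ℝ}
    (hH : ContinuousOn H (ρ '' uIcc a b)) (hH₀ : ∀ x ∈ ρ '' uIcc a b, H x ≠ 0)
    (hg : ContinuousOn g (uIcc a b)) (hρ : ∀ θ ∈ uIcc a b, HasDerivAt ρ (H (ρ θ) * g θ) θ) :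
    ∫ x in ρ a..ρ b, (H x)⁻¹ = ∫ θ in a..b, g θ := by
  have hρc : ContinuousOn ρ (uIcc a b) := fun θ hθ => (hρ θ hθ).continuousAt.continuousWithinAt
  rw [← intervalIntegral.integral_comp_mul_deriv' (g := fun x => (H x)⁻¹) hρ
    ((hH.comp hρc (mapsTo_image _ _)).mul hg) (hH.inv₀ hH₀)]
  refine intervalIntegral.integral_congr fun θ hθ => ?_
  simp only [Function.comp_apply]
  rw [inv_mul_cancel_left₀ (hH₀ _ (mem_image_of_mem _ hθ))]

theorem eq_of_hasDerivAt_mul_of_integral_eq_zero {H g ρ : ℝ → ℝ} {T : ℝ} {s : Set ℝ}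
    [s.OrdConnected] (hH : ContinuousOn H s) (hpos : ∀ x ∈ s, 0 < H x) (hg : Continuous g)
    (hT : 0 ≤ T) (hρ : ∀ θ ∈ Icc 0 T, HasDerivAt ρ (H (ρ θ) * g θ) θ)
    (hmem : ∀ θ ∈ Icc 0 T, ρ θ ∈ s) (hint : ∫ θ in 0..T, g θ = 0) : ρ T = ρ 0 := by
  rw [← uIcc_of_le hT] at hρ hmem
  have himage : ρ '' uIcc 0 T ⊆ s := image_subset_iff.2 hmem
  have hzero : ∫ x in ρ 0..ρ T, (H x)⁻¹ = 0 :=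
    (integral_inv_eq_integral_of_hasDerivAt_mul (hH.mono himage)
      (fun x hx => (hpos x (himage hx)).ne') hg.continuousOn hρ).trans hint
  have hsub : uIcc (ρ 0) (ρ T) ⊆ s :=
    Set.OrdConnected.uIcc_subset ‹_› (hmem 0 left_mem_uIcc) (hmem T right_mem_uIcc)
  have hinv : IntervalIntegrable (fun x => (H x)⁻¹) MeasureTheory.volume (ρ 0) (ρ T) :=
    ((hH.mono hsub).inv₀ fun x hx => (hpos x (hsub hx)).ne').intervalIntegrable
  have hinv_pos : ∀ x ∈ uIcc (ρ 0) (ρ T), 0 < (H x)⁻¹ := fun x hx =>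
    inv_pos.2 (hpos x (hsub hx))
  rcases lt_trichotomy (ρ 0) (ρ T) with hlt | heq | hgt
  · exact absurd hzero (intervalIntegral.intervalIntegral_pos_of_pos_on hinv
      (fun x hx => hinv_pos x (Icc_subset_uIcc (Ioo_subset_Icc_self hx))) hlt).ne'
  · exact heq.symm
  · rw [intervalIntegral.integral_symm, neg_eq_zero] at hzero
    exact absurd hzero (intervalIntegral.intervalIntegral_pos_of_pos_on hinv.symm
      (fun x hx => hinv_pos x (Icc_subset_uIcc' (Ioo_subset_Icc_self hx))) hgt).ne'

section SeparableExistence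

variable {φ : ℝ → ℝ} {M : ℝ}

theorem sub_div_le_integral_inv (hφ : Continuous φ) (hpos : ∀ x, 0 < φ x) (hM : ∀ x, φ x ≤ M)
    {a b : ℝ} (hab : a ≤ b) : (b - a) / M ≤ ∫ t in a..b, (φ t)⁻¹ := by
  have := intervalIntegral.integral_mono_on hab
    (intervalIntegrable_const (μ := MeasureTheory.volume))
    ((hφ.inv₀ fun t => (hpos t).ne').intervalIntegrable a b)
    fun t _ => inv_anti₀ (hpos t) (hM t)
  rwa [intervalIntegral.integral_const, smul_eq_mul, ← div_eq_mul_inv] at this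

theorem exists_hasDerivAt_mul_of_pos_of_le (hφ : Continuous φ) (hpos : ∀ x, 0 < φ x)
    (hM : ∀ x, φ x ≤ M) {g : ℝ → ℝ} (hg : Continuous g) (x₀ : ℝ) :
    ∃ ρ : ℝ → ℝ, ρ 0 = x₀ ∧ ∀ θ, HasDerivAt ρ (φ (ρ θ) * g θ) θ := by
  have hMpos : 0 < M := (hpos 0).trans_le (hM 0)
  set F : ℝ → ℝ := fun x => ∫ t in x₀..x, (φ t)⁻¹
  have hF : ∀ x, HasDerivAt F (φ x)⁻¹ x := fun x =>
    ((hφ.inv₀ fun t => (hpos t).ne').integral_hasStrictDerivAt x₀ x).hasDerivAt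
  have hFmono : StrictMono F := strictMono_of_hasDerivAt_pos hF fun x => inv_pos.2 (hpos x)
  have hlin : Tendsto (fun x => (x - x₀) / M) atTop atTop ∧
      Tendsto (fun x => (x - x₀) / M) atBot atBot :=
    ⟨(tendsto_atTop_add_const_right _ _ tendsto_id).atTop_div_const hMpos,
      (tendsto_atBot_add_const_right _ _ tendsto_id).atBot_div_const hMpos⟩
  have hFsurj : Function.Surjective F := by
    refine continuous_iff_continuousAt.2 (fun x => (hF x).continuousAt) |>.surjective
      (tendsto_atTop_mono' _ ?_ hlin.1) (tendsto_atBot_mono' _ ?_ hlin.2)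
    · filter_upwards [eventually_ge_atTop x₀] with x hx
      exact sub_div_le_integral_inv hφ hpos hM hx
    · filter_upwards [eventually_le_atBot x₀] with x hx
      have := sub_div_le_integral_inv hφ hpos hM hx
      rw [show F x = -∫ t in x..x₀, (φ t)⁻¹ from intervalIntegral.integral_symm _ _]
      linarith [neg_sub x₀ x ▸ neg_div M (x₀ - x)]
  set e := hFmono.orderIsoOfSurjective F hFsurj
  have he : ∀ y, HasDerivAt e.symm (φ (e.symm y)) y := fun y => by
    simpa using (hF (e.symm y)).of_local_left_inverse e.symm.continuous.continuousAt
      (inv_ne_zero (hpos _).ne') (Eventually.of_forall e.apply_symm_apply)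
  refine ⟨fun θ => e.symm (∫ t in 0..θ, g t), ?_, fun θ =>
    (he _).comp θ (hg.integral_hasStrictDerivAt 0 θ).hasDerivAt⟩
  show e.symm (∫ t in 0..0, g t) = x₀
  rw [intervalIntegral.integral_same, e.symm_apply_eq]
  exact intervalIntegral.integral_same.symm

end SeparableExistence

def SmallSolutionsReturn (v : ℝ → ℝ → ℝ) (T : ℝ) : Prop :=
  ∃ ε > 0, ∀ ρ₀ : ℝ, 0 < ρ₀ → ρ₀ < ε →
    (∃ ρ : ℝ → ℝ, ρ 0 = ρ₀ ∧ ∀ θ ∈ Icc 0 T, HasDerivAt ρ (v θ (ρ θ)) θ) ∧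
      ∀ ρ : ℝ → ℝ, ρ 0 = ρ₀ → (∀ θ ∈ Icc 0 T, HasDerivAt ρ (v θ (ρ θ)) θ) → ρ T = ρ 0

theorem smallSolutionsReturn_zero {T : ℝ} (hT : 0 ≤ T) :
    SmallSolutionsReturn (fun _ _ => 0) T :=
  ⟨1, one_pos, fun ρ₀ _ _ => ⟨⟨fun _ => ρ₀, rfl, fun θ _ => hasDerivAt_const θ ρ₀⟩,
    fun _ _ hρ => constant_of_has_deriv_right_zero
      (fun θ hθ => (hρ θ hθ).continuousAt.continuousWithinAt)
      (fun θ hθ => (hρ θ (Ico_subset_Icc_self hθ)).hasDerivWithinAt) T ⟨hT, le_rfl⟩⟩⟩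

theorem smallSolutionsReturn_of_pos {H g : ℝ → ℝ} {δ C T : ℝ} (hH : Continuous H)
    (hδ : 0 < δ) (hpos : ∀ x ∈ Ioo 0 δ, 0 < H x) (hC : ∀ x ∈ Ioo 0 δ, H x ≤ C * x)
    (hg : Continuous g) (hT : 0 ≤ T) (hint : ∫ θ in 0..T, g θ = 0) :
    SmallSolutionsReturn (fun θ x => H x * g θ) T := by
  obtain ⟨Cg, hCg⟩ := isCompact_Icc.exists_bound_of_continuousOn (s := Icc 0 T) hg.continuousOn
  have hCg₀ : 0 ≤ Cg := (norm_nonneg _).trans (hCg 0 ⟨le_rfl, hT⟩)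
  have hC₀ : 0 < C := by
    have hmid : δ / 2 ∈ Ioo 0 δ := ⟨half_pos hδ, half_lt_self hδ⟩
    nlinarith [hpos _ hmid, hC _ hmid]
  set L := C * Cg + 1
  have hL : 0 < L := by positivity
  have hbound : ∀ x ∈ Ioo 0 δ, ∀ θ ∈ Icc 0 T, |H x * g θ| < L * x := fun x hx θ hθ => by
    rw [abs_mul, abs_of_pos (hpos x hx), ← Real.norm_eq_abs]
    calc H x * ‖g θ‖ ≤ C * x * Cg :=
          mul_le_mul (hC x hx) (hCg θ hθ) (norm_nonneg _) ((hpos x hx).le.trans (hC x hx))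
      _ < L * x := by nlinarith [hx.1]
  refine ⟨δ * exp (-(L * T)), by positivity, fun ρ₀ hρ₀ hε => ?_⟩
  set ℓ := ρ₀ * exp (-(L * T))
  set u := ρ₀ * exp (L * T)
  have hℓu : ℓ ≤ u := mul_le_mul_of_nonneg_left (exp_le_exp.2 (by nlinarith)) hρ₀.le
  have hu : u < δ :=
    calc u < δ * exp (-(L * T)) * exp (L * T) := mul_lt_mul_of_pos_right hε (exp_pos _)
      _ = δ := by rw [mul_assoc, ← exp_add, neg_add_cancel, exp_zero, mul_one]
  have hhull : Icc ℓ u ⊆ Ioo 0 δ := fun x hx =>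
    ⟨(by positivity : 0 < ℓ).trans_le hx.1, hx.2.trans_lt hu⟩
  have hstays : ∀ ρ f : ℝ → ℝ, ρ 0 = ρ₀ → (∀ θ ∈ Icc 0 T, HasDerivAt ρ (f θ) θ) →
      (∀ θ ∈ Icc 0 T, ρ θ ∈ Icc ℓ u → f θ = H (ρ θ) * g θ) →
      ∀ θ ∈ Icc 0 T, ρ θ ∈ Icc ℓ u := by
    rintro ρ f rfl hρ hf
    refine mem_Icc_mul_exp_of_abs_deriv_lt hL.le hρ₀.le hρ fun θ hθ hmem => ?_
    rw [hf θ (Ico_subset_Icc_self hθ) hmem]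
    exact hbound _ (hhull hmem) θ (Ico_subset_Icc_self hθ)
  constructor
  · -- clipped to `[ℓ, u]`, `H` is positive and bounded, so the separable equation is solvable
    set Hc := IccExtend hℓu fun x => H x
    have hHc : Continuous Hc := continuous_IccExtend_iff.2 (hH.comp continuous_subtype_val)
    have hHc_eq : ∀ x ∈ Icc ℓ u, Hc x = H x := fun x hx => IccExtend_of_mem _ _ hx
    obtain ⟨M, hM⟩ := isCompact_Icc.exists_bound_of_continuousOn (s := Icc ℓ u) hH.continuousOn
    obtain ⟨ρ, hρ₀, hρ⟩ := exists_hasDerivAt_mul_of_pos_of_le hHc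
      (fun x => hpos _ (hhull (projIcc ℓ u hℓu x).2))
      (fun x => (le_abs_self _).trans (hM _ (projIcc ℓ u hℓu x).2)) hg ρ₀
    have hmem := hstays ρ _ hρ₀ (fun θ _ => hρ θ) fun θ _ hθ => by rw [hHc_eq _ hθ]
    exact ⟨ρ, hρ₀, fun θ hθ => by simpa only [hHc_eq _ (hmem θ hθ)] using hρ θ⟩
  · intro ρ hρ₀ hρ
    exact eq_of_hasDerivAt_mul_of_integral_eq_zero hH.continuousOn
      (fun x hx => hpos x (hhull hx)) hg hT hρ (hstays ρ _ hρ₀ hρ fun _ _ _ => rfl) hint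

theorem smallSolutionsReturn_of_ne_zero {H g : ℝ → ℝ} {δ C T : ℝ} (hH : Continuous H)
    (hδ : 0 < δ) (hne : ∀ x ∈ Ioo 0 δ, H x ≠ 0) (hC : ∀ x ∈ Ioo 0 δ, |H x| ≤ C * x)
    (hg : Continuous g) (hT : 0 ≤ T) (hint : ∫ θ in 0..T, g θ = 0) :
    SmallSolutionsReturn (fun θ x => H x * g θ) T := by
  rcases isPreconnected_Ioo.eq_or_eq_neg_of_sq_eq (f := fun x => |H x|) hH.abs.continuousOn
      hH.continuousOn (fun x _ => sq_abs (H x)) (hne _) with habs | habs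
  · exact smallSolutionsReturn_of_pos hH hδ
      (fun x hx => by rw [← habs hx]; exact abs_pos.2 (hne x hx))
      (fun x hx => by rw [← habs hx]; exact hC x hx) hg hT hint
  · replace habs : ∀ x ∈ Ioo 0 δ, |H x| = -H x := habs
    have := smallSolutionsReturn_of_pos (H := fun x => -H x) (g := fun θ => -g θ) hH.neg hδ
      (fun x hx => by rw [← habs x hx]; exact abs_pos.2 (hne x hx))
      (fun x hx => by rw [← habs x hx]; exact hC x hx) hg.neg hT
      (by rw [intervalIntegral.integral_neg, hint, neg_zero])
    simpa only [neg_mul_neg] using this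

theorem Polynomial.eventually_eval_ne_zero_nhdsNE {R : Type*} [CommRing R] [IsDomain R]
    [TopologicalSpace R] [T1Space R] {P : Polynomial R} (hP : P ≠ 0) (a : R) :
    ∀ᶠ x in 𝓝[≠] a, P.eval x ≠ 0 := by
  have := mem_codiscreteWithin_iff_forall_mem_nhdsNE.1
    (Polynomial.finite_setOfPred_isRoot hP).compl_mem_codiscrete a (mem_univ a)
  rwa [compl_univ, union_empty] at this

theorem stmt0_general (k m : ℕ) (Q : MvPolynomial (Fin 2) ℝ) (a : ℕ → ℝ)
    (Qf : ℝ → ℝ → ℝ) (hQf : ∀ x y, Qf x y = eval ![x, y] Q)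
    (R : ℝ → ℝ) (hR : ∀ ρ, R ρ = ∑ i ∈ Finset.range (m + 1), a i * ρ ^ (2 * i))
    (hint : ∫ θ in (0:ℝ)..(2 * π), Qf (cos θ) (sin θ) = 0) :
    ∃ ε > 0, ∀ ρ₀ : ℝ, 0 < ρ₀ → ρ₀ < ε →
      ((∃ ρ : ℝ → ℝ, ρ 0 = ρ₀ ∧ ∀ θ ∈ Set.Icc (0:ℝ) (2 * π),
          HasDerivAt ρ (ρ θ ^ (k + 1) * Qf (cos θ) (sin θ) * R (ρ θ)) θ) ∧
        ∀ ρ : ℝ → ℝ, ρ 0 = ρ₀ →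
          (∀ θ ∈ Set.Icc (0:ℝ) (2 * π),
            HasDerivAt ρ (ρ θ ^ (k + 1) * Qf (cos θ) (sin θ) * R (ρ θ)) θ) →
          ρ (2 * π) = ρ 0) := by
  show SmallSolutionsReturn (fun θ x => x ^ (k + 1) * Qf (cos θ) (sin θ) * R x) (2 * π)
  set P : Polynomial ℝ :=
    ∑ i ∈ Finset.range (m + 1), Polynomial.C (a i) * Polynomial.X ^ (2 * i)
  have hRP : R = fun x => P.eval x := funext fun x => by simp [hR, P, Polynomial.eval_finsetSum]
  by_cases hP : P = 0
  · simpa only [hRP, hP, Polynomial.eval_zero, mul_zero] using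
      smallSolutionsReturn_zero two_pi_pos.le
  obtain ⟨δ, hδ, hne⟩ := mem_nhdsGT_iff_exists_Ioo_subset.1
    (nhdsWithin_mono _ (fun x hx => ne_of_gt hx) (P.eventually_eval_ne_zero_nhdsNE hP 0))
  have hRc : Continuous R := hRP ▸ P.continuous
  have hg : Continuous fun θ => Qf (cos θ) (sin θ) := by
    simp only [hQf]
    exact (continuous_eval Q).comp (continuous_pi fun i => by fin_cases i <;> fun_prop)
  obtain ⟨K, hK⟩ := isCompact_Icc.exists_bound_of_continuousOn (s := Icc 0 δ)
    ((continuous_pow k).mul hRc).continuousOn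
  have hv : (fun θ x => x ^ (k + 1) * Qf (cos θ) (sin θ) * R x)
      = fun θ x => x ^ (k + 1) * R x * Qf (cos θ) (sin θ) := by
    funext θ x; ring
  rw [hv]
  refine smallSolutionsReturn_of_ne_zero (C := K) ((continuous_pow _).mul hRc) hδ
    (fun x hx => mul_ne_zero (pow_ne_zero _ hx.1.ne') (hRP ▸ hne hx)) (fun x hx => ?_) hg
    two_pi_pos.le hint
  calc |x ^ (k + 1) * R x| = |x ^ k * R x| * x := by
        rw [abs_mul, abs_mul, abs_pow, abs_pow, abs_of_pos hx.1, pow_succ]; ring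
    _ ≤ K * x := mul_le_mul_of_nonneg_right
        (by simpa using hK x (Ioo_subset_Icc_self hx)) hx.1.le

/-- Theorem 1 (first part, quantitative form): solutions of the polar ODE
`dρ/dθ = ρ^(k+1) Q(cos θ, sin θ) R(ρ)` with sufficiently small positive initial
value are defined on `[0, 2π]` and satisfy `ρ(2π) = ρ(0)`. -/
theorem stmt0 (k m : ℕ) (hk : 1 ≤ k) (Q : MvPolynomial (Fin 2) ℝ)
    (hQ : Q.IsHomogeneous k) (a : ℕ → ℝ)
    (Qf : ℝ → ℝ → ℝ) (hQf : ∀ x y, Qf x y = eval ![x, y] Q)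
    (R : ℝ → ℝ) (hR : ∀ ρ, R ρ = ∑ i ∈ Finset.range (m + 1), a i * ρ ^ (2 * i))
    (hint : ∫ θ in (0:ℝ)..(2 * π), Qf (cos θ) (sin θ) = 0) :
    ∃ ε > 0, ∀ ρ₀ : ℝ, 0 < ρ₀ → ρ₀ < ε →
      ((∃ ρ : ℝ → ℝ, ρ 0 = ρ₀ ∧ ∀ θ ∈ Set.Icc (0:ℝ) (2 * π),
          HasDerivAt ρ (ρ θ ^ (k + 1) * Qf (cos θ) (sin θ) * R (ρ θ)) θ) ∧
        ∀ ρ : ℝ → ℝ, ρ 0 = ρ₀ →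
          (∀ θ ∈ Set.Icc (0:ℝ) (2 * π),
            HasDerivAt ρ (ρ θ ^ (k + 1) * Qf (cos θ) (sin θ) * R (ρ θ)) θ) →
          ρ (2 * π) = ρ 0) :=
  stmt0_general k m Q a Qf hQf R hR hint
end

section
/- The two planar vector fields X(x,y) = (-y + x Q(x,y) S(x²+y²), x + y Q(x,y) S(x²+y²)) and Y(x,y) = (x (x²+y²)^{k/2} S(x²+y²), y (x²+y²)^{k/2} S(x²+y²)) commute: their Lie bracket [X, Y] vanishes identically on ℝ² ∖ {0} (and on all of ℝ² when k is even). -/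
/-!
Write `E` for the Euler field `z ↦ z`, `R` for the rotation field `(x, y) ↦ (-y, x)` and
`N = x² + y²`. Then `X = R + g E` and `Y = h E` with `g = Q · S(N)` and `h = N^(k/2) · S(N)`,
and for any such fields `[X, Y] = (Dh(R) + g Dh(E) - h Dg(E)) E`. Off the origin `h` is a function
of `N`, which is constant along the rotation, so `Dh(R) = 0`; and `g`, `h` are both a
positively `k`-homogeneous factor times the same `S(N)`, so by Euler's identity
`g Dh(E) = h Dg(E)`. At the origin both fields vanish, hence so does the bracket.
-/

open Real MvPolynomial

section
variable {E : Type*} [NormedAddCommGroup E] [NormedSpace ℝ E]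

theorem fderiv_apply_self_of_homogeneous {φ : E → ℝ} {x : E} {r : ℝ}
    (hφ : DifferentiableAt ℝ φ x) (hom : ∀ t > 0, φ (t • x) = t ^ r * φ x) :
    fderiv ℝ φ x x = r * φ x := by
  have hline : HasDerivAt (fun t : ℝ => t • x) x 1 := by
    simpa using (hasDerivAt_id (1 : ℝ)).smul_const x
  have hcomp : HasDerivAt (fun t : ℝ => φ (t • x)) (fderiv ℝ φ x x) 1 := by
    have h1 : HasFDerivAt φ (fderiv ℝ φ x) ((fun t : ℝ => t • x) 1) := by
      simpa using hφ.hasFDerivAt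
    exact h1.comp_hasDerivAt 1 hline
  have hpow : HasDerivAt (fun t : ℝ => t ^ r * φ x) (r * φ x) 1 := by
    simpa using (hasDerivAt_rpow_const (x := 1) (p := r) (Or.inl one_ne_zero)).mul_const (φ x)
  refine hcomp.unique (hpow.congr_of_eventuallyEq ?_)
  filter_upwards [lt_mem_nhds one_pos] with t ht using hom t ht

theorem mul_fderiv_apply_self_mul_comm {φ ψ σ : E → ℝ} {x : E} {r : ℝ}
    (hφ : DifferentiableAt ℝ φ x) (hψ : DifferentiableAt ℝ ψ x)
    (hσ : DifferentiableAt ℝ σ x)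
    (hφr : fderiv ℝ φ x x = r * φ x) (hψr : fderiv ℝ ψ x x = r * ψ x) :
    φ x * σ x * fderiv ℝ (fun y => ψ y * σ y) x x
      = ψ x * σ x * fderiv ℝ (fun y => φ y * σ y) x x := by
  rw [fderiv_fun_mul hφ hσ, fderiv_fun_mul hψ hσ]
  simp only [add_apply, smul_apply, smul_eq_mul, hψr, hφr]
  ring

theorem VectorField.lieBracket_add_smul_id_smul_id (R : E →L[ℝ] E) {g h : E → ℝ} {x : E}
    (hg : DifferentiableAt ℝ g x) (hh : DifferentiableAt ℝ h x) :
    VectorField.lieBracket ℝ (fun y => R y + g y • y) (fun y => h y • y) x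
      = (fderiv ℝ h x (R x) + g x * fderiv ℝ h x x - h x * fderiv ℝ g x x) • x := by
  rw [VectorField.lieBracket,
    fderiv_fun_add R.differentiableAt (hg.fun_smul differentiableAt_fun_id),
    fderiv_fun_smul hg differentiableAt_fun_id, fderiv_fun_smul hh differentiableAt_fun_id]
  simp only [fderiv_fun_id, add_apply, smul_apply, ContinuousLinearMap.id_apply, smul_add,
    ContinuousLinearMap.smulRight_apply, map_add, map_smul, ContinuousLinearMap.fderiv]
  module
end

theorem MvPolynomial.IsHomogeneous.eval_smul {σ R : Type*} [CommSemiring R]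
    {φ : MvPolynomial σ R} {n : ℕ} (hφ : φ.IsHomogeneous n) (t : R) (x : σ → R) :
    eval (t • x) φ = t ^ n * eval x φ := by
  simp only [eval_eq, Finset.mul_sum, Pi.smul_apply, smul_eq_mul, mul_pow,
    Finset.prod_mul_distrib, Finset.prod_pow_eq_pow_sum]
  refine Finset.sum_congr rfl fun d hd => ?_
  rw [← hφ.degree_eq_sum_deg_support hd]
  ring

theorem differentiable_eval_fst_snd (Q : MvPolynomial (Fin 2) ℝ) :
    Differentiable ℝ (fun z : ℝ × ℝ => eval ![z.1, z.2] Q) := by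
  intro z
  simp_rw [← coe_aeval_eq_eval]
  refine (AnalyticAt.aeval_mvPolynomial (fun i => ?_) Q).differentiableAt
  fin_cases i
  · exact analyticAt_fst
  · exact analyticAt_snd

def quarterRotation : ℝ × ℝ →L[ℝ] ℝ × ℝ :=
  (-ContinuousLinearMap.snd ℝ ℝ ℝ).prod (ContinuousLinearMap.fst ℝ ℝ ℝ)

theorem fderiv_comp_normSq_quarterRotation {F : ℝ → ℝ} {p : ℝ × ℝ}
    (hF : DifferentiableAt ℝ F (p.1 ^ 2 + p.2 ^ 2)) :
    fderiv ℝ (fun z : ℝ × ℝ => F (z.1 ^ 2 + z.2 ^ 2)) p (quarterRotation p) = 0 := by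
  rw [fderiv_fun_comp p hF (by fun_prop), ContinuousLinearMap.comp_apply,
    fderiv_fun_add (by fun_prop) (by fun_prop), fderiv_fun_pow _ (by fun_prop),
    fderiv_fun_pow _ (by fun_prop)]
  simp only [fderiv_fst, fderiv_snd, quarterRotation, ContinuousLinearMap.prod_apply,
    neg_apply, ContinuousLinearMap.coe_snd', ContinuousLinearMap.coe_fst', add_apply, smul_apply,
    smul_eq_mul, fderiv_eq_smul_deriv]
  ring

theorem lieBracket_quarterRotation_add_smul_id_eq_zero {k : ℕ} {Q : MvPolynomial (Fin 2) ℝ}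
    (hQ : Q.IsHomogeneous k) {S : ℝ → ℝ} (hS : Differentiable ℝ S) {p : ℝ × ℝ}
    (hp : p ≠ 0) :
    VectorField.lieBracket ℝ
      (fun z => quarterRotation z + (eval ![z.1, z.2] Q * S (z.1 ^ 2 + z.2 ^ 2)) • z)
      (fun z => ((z.1 ^ 2 + z.2 ^ 2) ^ ((k : ℝ) / 2) * S (z.1 ^ 2 + z.2 ^ 2)) • z) p = 0 := by
  have hN : 0 < p.1 ^ 2 + p.2 ^ 2 := by
    have : p.1 ≠ 0 ∨ p.2 ≠ 0 := by
      contrapose! hp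
      exact Prod.ext hp.1 hp.2
    rcases this with h | h <;> positivity
  have hQd := differentiable_eval_fst_snd Q p
  have hRd : DifferentiableAt ℝ (fun z : ℝ × ℝ => (z.1 ^ 2 + z.2 ^ 2) ^ ((k : ℝ) / 2)) p :=
    DifferentiableAt.rpow_const (by fun_prop) (Or.inl hN.ne')
  have hSd : DifferentiableAt ℝ (fun z : ℝ × ℝ => S (z.1 ^ 2 + z.2 ^ 2)) p :=
    hS.differentiableAt.comp p (by fun_prop)
  have hQk :
      fderiv ℝ (fun z : ℝ × ℝ => eval ![z.1, z.2] Q) p p = k * eval ![p.1, p.2] Q := by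
    refine fderiv_apply_self_of_homogeneous hQd fun t _ => ?_
    simp [← hQ.eval_smul]
  have hRk : fderiv ℝ (fun z : ℝ × ℝ => (z.1 ^ 2 + z.2 ^ 2) ^ ((k : ℝ) / 2)) p p
      = k * (p.1 ^ 2 + p.2 ^ 2) ^ ((k : ℝ) / 2) := by
    refine fderiv_apply_self_of_homogeneous hRd fun t ht => ?_
    have hsq : (t • p).1 ^ 2 + (t • p).2 ^ 2 = t ^ 2 * (p.1 ^ 2 + p.2 ^ 2) := by
      simp only [Prod.smul_fst, Prod.smul_snd, smul_eq_mul]; ring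
    rw [hsq, mul_rpow (by positivity) hN.le, ← rpow_natCast, ← rpow_mul ht.le,
      show ((2 : ℕ) : ℝ) * (k / 2) = k by push_cast; ring]
  rw [VectorField.lieBracket_add_smul_id_smul_id _ (hQd.fun_mul hSd) (hRd.fun_mul hSd),
    fderiv_comp_normSq_quarterRotation (F := fun u => u ^ ((k : ℝ) / 2) * S u)
      ((differentiableAt_id.rpow_const (Or.inl hN.ne')).mul hS.differentiableAt),
    mul_fderiv_apply_self_mul_comm hQd hRd hSd hQk hRk]
  simp

/-- The system commutes with the field
`Y = ((x²+y²)^(k/2) S(x²+y²)) (x, y)`: the Lie bracket `[X,Y] = DY·X − DX·Y`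
vanishes on `ℝ² ∖ {0}`, and everywhere when `k` is even. -/
theorem stmt6 (k m : ℕ) (Q : MvPolynomial (Fin 2) ℝ) (hQ : Q.IsHomogeneous k)
    (a : ℕ → ℝ) (S : ℝ → ℝ)
    (hS : ∀ u, S u = ∑ i ∈ Finset.range (m + 1), a i * u ^ i)
    (X Y : ℝ × ℝ → ℝ × ℝ)
    (hX : ∀ p : ℝ × ℝ, X p =
      (-p.2 + p.1 * eval ![p.1, p.2] Q * S (p.1 ^ 2 + p.2 ^ 2),
        p.1 + p.2 * eval ![p.1, p.2] Q * S (p.1 ^ 2 + p.2 ^ 2)))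
    (hY : ∀ p : ℝ × ℝ, Y p =
      (p.1 * (p.1 ^ 2 + p.2 ^ 2) ^ ((k : ℝ) / 2) * S (p.1 ^ 2 + p.2 ^ 2),
        p.2 * (p.1 ^ 2 + p.2 ^ 2) ^ ((k : ℝ) / 2) * S (p.1 ^ 2 + p.2 ^ 2))) :
    (∀ p : ℝ × ℝ, p ≠ 0 → fderiv ℝ Y p (X p) - fderiv ℝ X p (Y p) = 0) ∧
      (Even k → ∀ p : ℝ × ℝ, fderiv ℝ Y p (X p) - fderiv ℝ X p (Y p) = 0) := by
  have hSd : Differentiable ℝ S := by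
    rw [funext hS]
    fun_prop
  have hXeq :
      X = fun z => quarterRotation z + (eval ![z.1, z.2] Q * S (z.1 ^ 2 + z.2 ^ 2)) • z := by
    funext z
    ext <;> simp [hX, quarterRotation] <;> ring
  have hYeq :
      Y = fun z => ((z.1 ^ 2 + z.2 ^ 2) ^ ((k : ℝ) / 2) * S (z.1 ^ 2 + z.2 ^ 2)) • z := by
    funext z
    ext <;> simp [hY] <;> ring
  have hbracket (p : ℝ × ℝ) : fderiv ℝ Y p (X p) - fderiv ℝ X p (Y p) = 0 := by
    rcases eq_or_ne p 0 with rfl | hp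
    · have hX0 : X 0 = 0 := by simp [hX]
      have hY0 : Y 0 = 0 := by simp [hY]
      rw [hX0, hY0, map_zero, map_zero, sub_zero]
    · rw [hXeq, hYeq]
      exact lieBracket_quarterRotation_add_smul_id_eq_zero hQ hSd hp
  exact ⟨fun p _ => hbracket p, fun _ => hbracket⟩
end

section
/- If two planar vector fields X = (x H(x,y), y H(x,y)) and Z = (R(x,y), S(x,y)) commute ([X,Z] = 0), where H is homogeneous of degree d and R, S are homogeneous of degree n, then (x Hₓ + (1−n) H) R + x Hᵧ S = 0 and y Hₓ R + (y Hᵧ + (1−n) H) S = 0 identically. -/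
/-!
Write `X = H • (x, y)`. Differentiating `Z` along the radial field `(x, y)` gives `n Z` by Euler's
identity, so `DZ·X = n H Z`, while the product rule gives
`DX·Z = H Z + (x, y) (Hₓ R + H_y S)`. Equating the two components of `DZ·X = DX·Z` gives the
identities.
-/

open MvPolynomial

namespace MvPolynomial

variable {𝕜 σ : Type*} [NontriviallyNormedField 𝕜] [Fintype σ]

theorem hasFDerivAt_eval (P : MvPolynomial σ 𝕜) (x : σ → 𝕜) :
    HasFDerivAt (fun v => eval v P)
      (∑ i, eval x (pderiv i P) • (ContinuousLinearMap.proj i : (σ → 𝕜) →L[𝕜] 𝕜)) x := by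
  classical
  induction P using MvPolynomial.induction_on with
  | C a =>
    refine (hasFDerivAt_const (𝕜 := 𝕜) a x).congr_fderiv ?_ |>.congr_of_eventuallyEq ?_
    · ext; simp
    · simp
  | add f g hf hg =>
    refine (hf.fun_add hg).congr_fderiv ?_ |>.congr_of_eventuallyEq ?_
    · ext; simp [add_mul, Finset.sum_add_distrib]
    · simp
  | mul_X f i hf =>
    refine (hf.fun_mul (hasFDerivAt_apply i x)).congr_fderiv ?_ |>.congr_of_eventuallyEq ?_
    · ext
      simp [Pi.single_apply, apply_ite (eval x), Finset.mul_sum, add_mul, ite_mul,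
        Finset.sum_add_distrib, mul_assoc]
    · simp

theorem sum_mul_eval_pderiv_of_isHomogeneous {P : MvPolynomial σ 𝕜} {n : ℕ}
    (hP : P.IsHomogeneous n) (x : σ → 𝕜) :
    ∑ i, x i * eval x (pderiv i P) = n * eval x P := by
  simpa using congrArg (eval x) hP.sum_X_mul_pderiv

end MvPolynomial

section Plane

variable {𝕜 : Type*} [NontriviallyNormedField 𝕜]

theorem hasFDerivAt_eval_fin_two (P : MvPolynomial (Fin 2) 𝕜) (p : 𝕜 × 𝕜) :
    HasFDerivAt (fun q : 𝕜 × 𝕜 => eval ![q.1, q.2] P)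
      (eval ![p.1, p.2] (pderiv 0 P) • ContinuousLinearMap.fst 𝕜 𝕜 𝕜
        + eval ![p.1, p.2] (pderiv 1 P) • ContinuousLinearMap.snd 𝕜 𝕜 𝕜) p := by
  have hlin := (ContinuousLinearEquiv.finTwoArrow 𝕜 𝕜).symm.hasFDerivAt (x := p)
  rw [ContinuousLinearEquiv.finTwoArrow_symm_apply] at hlin
  refine ((hasFDerivAt_eval P _).comp p hlin).congr_fderiv ?_
  ext <;> simp

theorem deriv_eval_fin_two_fst (P : MvPolynomial (Fin 2) 𝕜) (x y : 𝕜) :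
    deriv (fun x' => eval ![x', y] P) x = eval ![x, y] (pderiv 0 P) := by
  have hline := (hasDerivAt_id x).prodMk (hasDerivAt_const x y)
  simpa [Function.comp_def] using
    ((hasFDerivAt_eval_fin_two P (x, y)).comp_hasDerivAt x hline).deriv

theorem deriv_eval_fin_two_snd (P : MvPolynomial (Fin 2) 𝕜) (x y : 𝕜) :
    deriv (fun y' => eval ![x, y'] P) y = eval ![x, y] (pderiv 1 P) := by
  have hline := (hasDerivAt_const y x).prodMk (hasDerivAt_id y)
  simpa [Function.comp_def] using
    ((hasFDerivAt_eval_fin_two P (x, y)).comp_hasDerivAt y hline).deriv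

theorem fderiv_eval_pair_apply_radial {R S : MvPolynomial (Fin 2) 𝕜} {n : ℕ}
    (hR : R.IsHomogeneous n) (hS : S.IsHomogeneous n) (x y c : 𝕜) :
    fderiv 𝕜 (fun q : 𝕜 × 𝕜 => (eval ![q.1, q.2] R, eval ![q.1, q.2] S)) (x, y) (x * c, y * c)
      = (n * c * eval ![x, y] R, n * c * eval ![x, y] S) := by
  have hR' := sum_mul_eval_pderiv_of_isHomogeneous hR ![x, y]
  have hS' := sum_mul_eval_pderiv_of_isHomogeneous hS ![x, y]
  simp only [Fin.sum_univ_two, Matrix.cons_val_zero, Matrix.cons_val_one] at hR' hS'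
  rw [((hasFDerivAt_eval_fin_two R (x, y)).prodMk (hasFDerivAt_eval_fin_two S (x, y))).fderiv]
  simp only [ContinuousLinearMap.prod_apply, add_apply, smul_apply, ContinuousLinearMap.coe_fst',
    ContinuousLinearMap.coe_snd', smul_eq_mul, Prod.mk.injEq]
  constructor
  · linear_combination c * hR'
  · linear_combination c * hS'

theorem fderiv_mul_eval_pair_apply (H : MvPolynomial (Fin 2) 𝕜) (x y a b : 𝕜) :
    fderiv 𝕜 (fun q : 𝕜 × 𝕜 => (q.1 * eval ![q.1, q.2] H, q.2 * eval ![q.1, q.2] H))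
        (x, y) (a, b)
      = (a * eval ![x, y] H + x * (eval ![x, y] (pderiv 0 H) * a + eval ![x, y] (pderiv 1 H) * b),
         b * eval ![x, y] H + y * (eval ![x, y] (pderiv 0 H) * a + eval ![x, y] (pderiv 1 H) * b)) := by
  have hH := hasFDerivAt_eval_fin_two H (x, y)
  rw [((hasFDerivAt_fst.fun_mul hH).prodMk (hasFDerivAt_snd.fun_mul hH)).fderiv]
  simp only [ContinuousLinearMap.prod_apply, add_apply, smul_apply, ContinuousLinearMap.coe_fst',
    ContinuousLinearMap.coe_snd', smul_eq_mul, Prod.mk.injEq]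
  constructor <;> ring

end Plane

theorem stmt9_general (n : ℕ) (H R S : MvPolynomial (Fin 2) ℝ)
    (hR : R.IsHomogeneous n) (hS : S.IsHomogeneous n)
    (X Z : ℝ × ℝ → ℝ × ℝ)
    (hX : ∀ p : ℝ × ℝ, X p =
      (p.1 * eval ![p.1, p.2] H, p.2 * eval ![p.1, p.2] H))
    (hZ : ∀ p : ℝ × ℝ, Z p = (eval ![p.1, p.2] R, eval ![p.1, p.2] S))
    (hcomm : ∀ p : ℝ × ℝ, fderiv ℝ Z p (X p) = fderiv ℝ X p (Z p)) :
    ∀ x y : ℝ,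
      ((x * deriv (fun x' => eval ![x', y] H) x + (1 - (n : ℝ)) * eval ![x, y] H)
            * eval ![x, y] R
          + x * deriv (fun y' => eval ![x, y'] H) y * eval ![x, y] S = 0) ∧
      (y * deriv (fun x' => eval ![x', y] H) x * eval ![x, y] R
          + (y * deriv (fun y' => eval ![x, y'] H) y + (1 - (n : ℝ)) * eval ![x, y] H)
            * eval ![x, y] S = 0) := by
  intro x y
  have key := hcomm (x, y)
  rw [funext hX, funext hZ] at key
  beta_reduce at key
  rw [fderiv_eval_pair_apply_radial hR hS, fderiv_mul_eval_pair_apply, Prod.mk.injEq] at key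
  rw [deriv_eval_fin_two_fst, deriv_eval_fin_two_snd]
  constructor
  · linear_combination -key.1
  · linear_combination -key.2

/-- If the fields `X = (xH, yH)` and `Z = (R, S)` commute, with `H` homogeneous
of degree `d` and `R, S` homogeneous of degree `n`, then the two linear
identities in the statement hold. -/
theorem stmt9 (d n : ℕ) (H R S : MvPolynomial (Fin 2) ℝ)
    (hH : H.IsHomogeneous d) (hR : R.IsHomogeneous n) (hS : S.IsHomogeneous n)
    (X Z : ℝ × ℝ → ℝ × ℝ)
    (hX : ∀ p : ℝ × ℝ, X p =
      (p.1 * eval ![p.1, p.2] H, p.2 * eval ![p.1, p.2] H))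
    (hZ : ∀ p : ℝ × ℝ, Z p = (eval ![p.1, p.2] R, eval ![p.1, p.2] S))
    (hcomm : ∀ p : ℝ × ℝ, fderiv ℝ Z p (X p) = fderiv ℝ X p (Z p)) :
    ∀ x y : ℝ,
      ((x * deriv (fun x' => eval ![x', y] H) x + (1 - (n : ℝ)) * eval ![x, y] H)
            * eval ![x, y] R
          + x * deriv (fun y' => eval ![x, y'] H) y * eval ![x, y] S = 0) ∧
      (y * deriv (fun x' => eval ![x', y] H) x * eval ![x, y] R
          + (y * deriv (fun y' => eval ![x, y'] H) y + (1 - (n : ℝ)) * eval ![x, y] H)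
            * eval ![x, y] S = 0) :=
  stmt9_general n H R S hR hS X Z hX hZ hcomm
end

section
/- The function I(x,y) = r⁶ / (1 − 3r² − 4x³ − 3xy² − 3y³ − 3r³ arctan r)², with r² = x² + y², is a first integral of the system ẋ = −y + x(y³ − 3xy² + 2x²y)(1 + x² + y²), ẏ = x + y(y³ − 3xy² + 2x²y)(1 + x² + y²): its derivative along the vector field vanishes wherever I is defined. -/
/-!
Darboux's method. Along the field `X = (P₁, P₂)` one has `X(r²) = 2 Q (1 + r²) · r²`, and
`X(D) = 3 Q (1 + r²) · D` away from the origin: the arctan terms of `X(D)` recombine into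
`D` itself because `d/du (u^{3/2} arctan √u) = (3/2) √u arctan √u + u / (2 (1 + u))`, and
what remains is a polynomial identity. Cofactors add under products and scale under powers,
so `I = (r²)³ / D²` has cofactor `3 · 2 Q (1 + r²) - 2 · 3 Q (1 + r²) = 0`. At the origin,
where `r` is not differentiable, the field itself vanishes.
-/

open Real

section Cofactor

variable {E : Type*} [NormedAddCommGroup E] [NormedSpace ℝ E]

/-- When `v = X p` for a vector field `X`, `K` is the value at `p` of the Darboux cofactor
of `f`. -/
def HasCofactorAt (f : E → ℝ) (K : ℝ) (v p : E) : Prop :=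
  ∃ f' : E →L[ℝ] ℝ, HasFDerivAt f f' p ∧ f' v = K * f p

variable {f g : E → ℝ} {K M : ℝ} {v p : E}

theorem HasCofactorAt.mul (hf : HasCofactorAt f K v p) (hg : HasCofactorAt g M v p) :
    HasCofactorAt (fun q => f q * g q) (K + M) v p := by
  obtain ⟨f', hf', hfv⟩ := hf
  obtain ⟨g', hg', hgv⟩ := hg
  refine ⟨_, hf'.mul hg', ?_⟩
  simp only [add_apply, smul_apply, smul_eq_mul, hfv, hgv]
  ring

theorem HasCofactorAt.pow (hf : HasCofactorAt f K v p) (n : ℕ) :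
    HasCofactorAt (fun q => f q ^ n) (n * K) v p := by
  obtain ⟨f', hf', hfv⟩ := hf
  refine ⟨_, hf'.pow n, ?_⟩
  rcases n with _ | n
  · simp
  · simp only [smul_apply, smul_eq_mul, hfv, nsmul_eq_mul]
    push_cast
    ring

theorem HasCofactorAt.inv (hf : HasCofactorAt f K v p) (hp : f p ≠ 0) :
    HasCofactorAt (fun q => (f q)⁻¹) (-K) v p := by
  obtain ⟨f', hf', hfv⟩ := hf
  refine ⟨_, (hasDerivAt_inv hp).comp_hasFDerivAt p hf', ?_⟩
  simp only [smul_apply, smul_eq_mul, hfv]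
  field_simp

theorem HasCofactorAt.div (hf : HasCofactorAt f K v p) (hg : HasCofactorAt g M v p)
    (hp : g p ≠ 0) : HasCofactorAt (fun q => f q / g q) (K - M) v p := by
  simpa only [div_eq_mul_inv, sub_eq_add_neg] using hf.mul (hg.inv hp)

end Cofactor

theorem HasCofactorAt.mul_deriv_add_mul_deriv {f : ℝ → ℝ → ℝ} {K a b x y : ℝ}
    (hf : HasCofactorAt (fun q : ℝ × ℝ => f q.1 q.2) K (a, b) (x, y)) :
    a * deriv (fun x' => f x' y) x + b * deriv (fun y' => f x y') y = K * f x y := by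
  obtain ⟨f', hf', hfv⟩ := hf
  have hx : HasDerivAt (fun x' => f x' y) (f' (1, 0)) x :=
    HasFDerivAt.comp_hasDerivAt (l := fun q : ℝ × ℝ => f q.1 q.2) x hf'
      ((hasDerivAt_id' x).prodMk (hasDerivAt_const x y))
  have hy : HasDerivAt (fun y' => f x y') (f' (0, 1)) y :=
    HasFDerivAt.comp_hasDerivAt (l := fun q : ℝ × ℝ => f q.1 q.2) y hf'
      ((hasDerivAt_const y x).prodMk (hasDerivAt_id' y))
  rw [hx.deriv, hy.deriv, ← smul_eq_mul, ← smul_eq_mul, ← f'.map_smul, ← f'.map_smul,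
    ← f'.map_add]
  simpa using hfv

theorem hasDerivAt_sqrt_pow_three_mul_arctan_sqrt {t : ℝ} (ht : 0 < t) :
    HasDerivAt (fun s => √s ^ 3 * arctan √s)
      (3 / 2 * √t * arctan √t + t / (2 * (1 + t))) t := by
  have hs := hasDerivAt_sqrt ht.ne'
  refine ((hs.pow 3).mul hs.arctan).congr_deriv ?_
  have hs0 : √t ≠ 0 := (sqrt_pos.2 ht).ne'
  have h2 := sq_sqrt ht.le
  have h3 : √t ^ 3 = t * √t := by rw [pow_succ, h2]
  norm_num [h2, h3]
  field_simp
  linear_combination (-3 * arctan √t * (1 + t)) * h2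

namespace ArctanFirstIntegral

def Q (x y : ℝ) : ℝ := y ^ 3 - 3 * x * y ^ 2 + 2 * x ^ 2 * y

def vectorField (x y : ℝ) : ℝ × ℝ :=
  (-y + x * Q x y * (1 + x ^ 2 + y ^ 2), x + y * Q x y * (1 + x ^ 2 + y ^ 2))

noncomputable def denom (x y : ℝ) : ℝ :=
  1 - 3 * (x ^ 2 + y ^ 2) - 4 * x ^ 3 - 3 * x * y ^ 2 - 3 * y ^ 3
    - 3 * √(x ^ 2 + y ^ 2) ^ 3 * arctan √(x ^ 2 + y ^ 2)

theorem hasCofactorAt_normSq (x y : ℝ) :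
    HasCofactorAt (fun q : ℝ × ℝ => q.1 ^ 2 + q.2 ^ 2) (2 * Q x y * (1 + x ^ 2 + y ^ 2))
      (vectorField x y) (x, y) := by
  refine ⟨_, ((hasFDerivAt_fst (𝕜 := ℝ) (p := (x, y))).pow 2).add
    ((hasFDerivAt_snd (𝕜 := ℝ) (p := (x, y))).pow 2), ?_⟩
  simp only [Nat.add_one_sub_one, pow_one, nsmul_eq_mul, Nat.cast_ofNat, vectorField,
    add_apply, smul_apply, ContinuousLinearMap.coe_fst', smul_eq_mul,
    ContinuousLinearMap.coe_snd']
  ring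

theorem hasCofactorAt_denom {x y : ℝ} (hu : 0 < x ^ 2 + y ^ 2) :
    HasCofactorAt (fun q : ℝ × ℝ => denom q.1 q.2) (3 * Q x y * (1 + x ^ 2 + y ^ 2))
      (vectorField x y) (x, y) := by
  obtain ⟨u', hu', huv⟩ := hasCofactorAt_normSq x y
  have hx := hasFDerivAt_fst (𝕜 := ℝ) (p := (x, y))
  have hy := hasFDerivAt_snd (𝕜 := ℝ) (p := (x, y))
  have hG := (hasDerivAt_sqrt_pow_three_mul_arctan_sqrt hu).comp_hasFDerivAt (x, y) hu'
  have hD := (((((hu'.const_mul 3).const_sub 1).sub ((hx.pow 3).const_mul 4)).sub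
    ((hx.mul (hy.pow 2)).const_mul 3)).sub ((hy.pow 3).const_mul 3)).sub (hG.const_mul 3)
  refine ⟨_, hD.congr_of_eventuallyEq (Filter.Eventually.of_forall fun q => ?_), ?_⟩
  · simp only [denom, Pi.mul_apply, Function.comp_apply, Pi.sub_apply]
    ring
  · have h3 : √(x ^ 2 + y ^ 2) ^ 3 = (x ^ 2 + y ^ 2) * √(x ^ 2 + y ^ 2) := by
      rw [pow_succ, sq_sqrt hu.le]
    simp only [Nat.add_one_sub_one, nsmul_eq_mul, Nat.cast_ofNat, pow_one, smul_add, sub_apply,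
      neg_apply, smul_apply, huv, smul_eq_mul, ContinuousLinearMap.coe_fst', add_apply,
      ContinuousLinearMap.coe_snd']
    simp only [vectorField, denom, Q, h3]
    field_simp
    ring

end ArctanFirstIntegral

open ArctanFirstIntegral in
/-- `I(x,y) = r⁶ / (1 − 3r² − 4x³ − 3xy² − 3y³ − 3r³ arctan r)²` is a first
integral of system (9): its derivative along the vector field vanishes
wherever it is defined. -/
theorem stmt10 (Qf P₁ P₂ D I : ℝ → ℝ → ℝ)
    (hQ : ∀ x y, Qf x y = y ^ 3 - 3 * x * y ^ 2 + 2 * x ^ 2 * y)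
    (hP₁ : ∀ x y, P₁ x y = -y + x * Qf x y * (1 + x ^ 2 + y ^ 2))
    (hP₂ : ∀ x y, P₂ x y = x + y * Qf x y * (1 + x ^ 2 + y ^ 2))
    (hD : ∀ x y, D x y = 1 - 3 * (x ^ 2 + y ^ 2) - 4 * x ^ 3 - 3 * x * y ^ 2
      - 3 * y ^ 3 - 3 * (Real.sqrt (x ^ 2 + y ^ 2)) ^ 3
        * Real.arctan (Real.sqrt (x ^ 2 + y ^ 2)))
    (hI : ∀ x y, I x y = (Real.sqrt (x ^ 2 + y ^ 2)) ^ 6 / (D x y) ^ 2) :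
    ∀ x y : ℝ, D x y ≠ 0 →
      P₁ x y * deriv (fun x' => I x' y) x + P₂ x y * deriv (fun y' => I x y') y = 0 := by
  intro x y hDxy
  obtain rfl : Qf = Q := funext fun x => funext (hQ x)
  obtain rfl : D = denom := funext fun x => funext (hD x)
  rcases (add_nonneg (sq_nonneg x) (sq_nonneg y)).eq_or_lt with h0 | hu
  · obtain ⟨rfl, rfl⟩ : x = 0 ∧ y = 0 := by constructor <;> nlinarith
    simp [hP₁, hP₂]
  have hIeq : (fun q : ℝ × ℝ => I q.1 q.2) =
      fun q => (q.1 ^ 2 + q.2 ^ 2) ^ 3 / denom q.1 q.2 ^ 2 := by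
    funext q
    rw [hI, show 6 = 2 * 3 by rfl, pow_mul, sq_sqrt (by positivity)]
  have hIcof := ((hasCofactorAt_normSq x y).pow 3).div ((hasCofactorAt_denom hu).pow 2)
    (pow_ne_zero 2 hDxy)
  rw [← hIeq] at hIcof
  rw [hP₁, hP₂, hIcof.mul_deriv_add_mul_deriv]
  ring
end

section
/- If the graph of the homogeneous trigonometric polynomial T₃(θ) = a₁ cos θ + a₃ cos 3θ + b₁ sin θ + b₃ sin 3θ has an axis of symmetry, i.e., there exists θ* with T₃(2θ* − θ) = T₃(θ) for all θ, then its coefficients satisfy a₁ b₃ (a₁² − 3b₁²) = a₃ b₁ (3a₁² − b₁²). -/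
open Real

/-- If the graph of `T₃(θ) = a₁ cos θ + a₃ cos 3θ + b₁ sin θ + b₃ sin 3θ` has
an axis of symmetry then `a₁b₃(a₁² − 3b₁²) = a₃b₁(3a₁² − b₁²)`. -/
theorem stmt12 (a₁ a₃ b₁ b₃ : ℝ) (T : ℝ → ℝ)
    (hT : ∀ θ, T θ = a₁ * cos θ + a₃ * cos (3 * θ) + b₁ * sin θ + b₃ * sin (3 * θ))
    (θs : ℝ) (hsym : ∀ θ, T (2 * θs - θ) = T θ) :
    a₁ * b₃ * (a₁ ^ 2 - 3 * b₁ ^ 2) = a₃ * b₁ * (3 * a₁ ^ 2 - b₁ ^ 2) := by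
  have h0 := hsym 0
  have h1 := hsym (π/2)
  have h2 := hsym (π/4)
  have h3 := hsym (-(π/4))
  simp only [hT, Real.cos_three_mul, Real.sin_three_mul, Real.cos_sub, Real.sin_sub,
    Real.cos_two_mul, Real.sin_two_mul, sub_zero, mul_zero, Real.cos_zero, Real.sin_zero,
    Real.cos_pi_div_two, Real.sin_pi_div_two, Real.cos_pi_div_four, Real.sin_pi_div_four,
    Real.cos_neg, Real.sin_neg] at h0 h1 h2 h3
  set c := Real.cos θs with hcdef
  set s := Real.sin θs with hsdef
  have hcs : c^2 + s^2 = 1 := by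
    rw [hcdef, hsdef]; exact Real.cos_sq_add_sin_sq θs
  set w := Real.sqrt 2 with hwdef
  have hw : w^2 = 2 := by rw [hwdef]; exact Real.sq_sqrt (by norm_num)
  have hwne : w ≠ 0 := by
    rw [hwdef]; positivity
  -- coefficient equations
  have e2 : w * ((a₁*(2*c^2-1) + b₁*(2*s*c) - a₁)
      + (a₁*(2*s*c) - b₁*(2*c^2-1) - b₁)
      - (a₃*(4*(2*c^2-1)^3 - 3*(2*c^2-1)) + b₃*(3*(2*s*c) - 4*(2*s*c)^3) - a₃)
      + (a₃*(3*(2*s*c) - 4*(2*s*c)^3) - b₃*(4*(2*c^2-1)^3 - 3*(2*c^2-1)) - b₃)) = 0 := by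
    linear_combination 2*h2 + ((6:ℝ)*b₃*c*s*w + (-6:ℝ)*b₃*c^2*w + (12:ℝ)*b₃*c^2*s^2*w + (-24:ℝ)*b₃*c^3*s*w + (8:ℝ)*b₃*c^3*s^3*w + (12:ℝ)*b₃*c^4*w + (-24:ℝ)*b₃*c^4*s^2*w + (24:ℝ)*b₃*c^5*s*w + (-8:ℝ)*b₃*c^6*w + (2:ℝ)*a₃*w + (-6:ℝ)*a₃*c*s*w + (-6:ℝ)*a₃*c^2*w + (12:ℝ)*a₃*c^2*s^2*w + (24:ℝ)*a₃*c^3*s*w + (-8:ℝ)*a₃*c^3*s^3*w + (12:ℝ)*a₃*c^4*w + (-24:ℝ)*a₃*c^4*s^2*w + (-24:ℝ)*a₃*c^5*s*w + (-8:ℝ)*a₃*c^6*w)*hw + ((24:ℝ)*b₃*c^2*w + (48:ℝ)*b₃*c^3*s*w + (-48:ℝ)*b₃*c^4*w + (24:ℝ)*a₃*c^2*w + (-48:ℝ)*a₃*c^3*s*w + (-48:ℝ)*a₃*c^4*w)*hcs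
  have e3 : w * ((a₁*(2*c^2-1) + b₁*(2*s*c) - a₁)
      - (a₁*(2*s*c) - b₁*(2*c^2-1) - b₁)
      - (a₃*(4*(2*c^2-1)^3 - 3*(2*c^2-1)) + b₃*(3*(2*s*c) - 4*(2*s*c)^3) - a₃)
      - (a₃*(3*(2*s*c) - 4*(2*s*c)^3) - b₃*(4*(2*c^2-1)^3 - 3*(2*c^2-1)) - b₃)) = 0 := by
    linear_combination 2*h3 + ((6:ℝ)*b₃*c*s*w + (6:ℝ)*b₃*c^2*w + (-12:ℝ)*b₃*c^2*s^2*w + (-24:ℝ)*b₃*c^3*s*w + (8:ℝ)*b₃*c^3*s^3*w + (-12:ℝ)*b₃*c^4*w + (24:ℝ)*b₃*c^4*s^2*w + (24:ℝ)*b₃*c^5*s*w + (8:ℝ)*b₃*c^6*w + (2:ℝ)*a₃*w + (6:ℝ)*a₃*c*s*w + (-6:ℝ)*a₃*c^2*w + (12:ℝ)*a₃*c^2*s^2*w + (-24:ℝ)*a₃*c^3*s*w + (8:ℝ)*a₃*c^3*s^3*w + (12:ℝ)*a₃*c^4*w + (-24:ℝ)*a₃*c^4*s^2*w + (24:ℝ)*a₃*c^5*s*w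 + (-8:ℝ)*a₃*c^6*w)*hw + ((-24:ℝ)*b₃*c^2*w + (48:ℝ)*b₃*c^3*s*w + (48:ℝ)*b₃*c^4*w + (24:ℝ)*a₃*c^2*w + (48:ℝ)*a₃*c^3*s*w + (-48:ℝ)*a₃*c^4*w)*hcs
  have e2' := (mul_eq_zero.mp e2).resolve_left hwne
  have e3' := (mul_eq_zero.mp e3).resolve_left hwne
  have hA : a₁*(2*c^2-1) + b₁*(2*s*c) - a₁ = 0 := by
    linear_combination (1/2:ℝ)*h0 + (1/4:ℝ)*e2' + (1/4:ℝ)*e3'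
  have hB : a₁*(2*s*c) - b₁*(2*c^2-1) - b₁ = 0 := by
    linear_combination (1/2:ℝ)*h1 + (1/4:ℝ)*e2' - (1/4:ℝ)*e3'
  have hC : a₃*(4*(2*c^2-1)^3 - 3*(2*c^2-1)) + b₃*(3*(2*s*c) - 4*(2*s*c)^3) - a₃ = 0 := by
    linear_combination (1/2:ℝ)*h0 - (1/4:ℝ)*e2' - (1/4:ℝ)*e3'
  have hD : a₃*(3*(2*s*c) - 4*(2*s*c)^3) - b₃*(4*(2*c^2-1)^3 - 3*(2*c^2-1)) - b₃ = 0 := by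
    linear_combination (-1/2:ℝ)*h1 + (1/4:ℝ)*e2' - (1/4:ℝ)*e3'
  have hu : a₁*s - b₁*c = 0 := by
    linear_combination (-s/2)*hA + (c/2)*hB + (b₁*c)*hcs
  have hv : a₃*(3*s - 4*s^3) - b₃*(4*c^3 - 3*c) = 0 := by
    linear_combination (-(3*s - 4*s^3)/2)*hC + ((4*c^3 - 3*c)/2)*hD
      + ((-3:ℝ)*b₃*c + (-12:ℝ)*b₃*c*s^2 + (28:ℝ)*b₃*c^3 + (16:ℝ)*b₃*c^3*s^2 + (64:ℝ)*b₃*c^3*s^4 + (-80:ℝ)*b₃*c^5 + (-64:ℝ)*b₃*c^5*s^2 + (64:ℝ)*b₃*c^7 + (-36:ℝ)*a₃*c^2*s + (48:ℝ)*a₃*c^4*s)*hcs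
  set r := a₁*c + b₁*s with hrdef
  have ha : a₁ = r*c := by rw [hrdef]; linear_combination s*hu - a₁*hcs
  have hb : b₁ = r*s := by rw [hrdef]; linear_combination (-c)*hu - b₁*hcs
  rw [ha, hb]
  linear_combination (-(r^3))*hv + (r^3*(-3*c*b₃ - 3*s*a₃))*hcs
end

section
/- The trigonometric polynomial T(θ) = Q(cos θ, sin θ) with Q(x,y) = y³ − 3xy² + 2x²y has no axis of symmetry: there is no θ* ∈ ℝ such that T(2θ* − θ) = T(θ) for all θ. -/
open Real

/-- The trigonometric polynomial `T(θ) = Q(cos θ, sin θ)` with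
`Q(x,y) = y³ − 3xy² + 2x²y` has no axis of symmetry. -/
theorem stmt13 (Q : ℝ → ℝ → ℝ)
    (hQ : ∀ x y, Q x y = y ^ 3 - 3 * x * y ^ 2 + 2 * x ^ 2 * y)
    (T : ℝ → ℝ) (hT : ∀ θ, T θ = Q (cos θ) (sin θ)) :
    ¬∃ θs : ℝ, ∀ θ : ℝ, T (2 * θs - θ) = T θ := by
  rintro ⟨s, h⟩
  set u := Real.cos (2 * s) with hu
  set v := Real.sin (2 * s) with hv
  have huv : u ^ 2 + v ^ 2 = 1 := by
    rw [hu, hv]; rw [add_comm]; exact Real.sin_sq_add_cos_sq (2 * s)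
  have key : ∀ θ : ℝ,
      (v * Real.cos θ - u * Real.sin θ) ^ 3
        - 3 * (u * Real.cos θ + v * Real.sin θ) * (v * Real.cos θ - u * Real.sin θ) ^ 2
        + 2 * (u * Real.cos θ + v * Real.sin θ) ^ 2 * (v * Real.cos θ - u * Real.sin θ)
      = (Real.sin θ) ^ 3 - 3 * Real.cos θ * (Real.sin θ) ^ 2
        + 2 * (Real.cos θ) ^ 2 * Real.sin θ := by
    intro θ
    have hθ := h θ
    rw [hT, hT, hQ, hQ, Real.cos_sub, Real.sin_sub] at hθ
    rw [hu, hv]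
    linarith [hθ]
  have h0 := key 0
  simp only [Real.cos_zero, Real.sin_zero] at h0
  have h2 := key (π / 2)
  simp only [Real.cos_pi_div_two, Real.sin_pi_div_two] at h2
  have h4 := key (π / 4)
  rw [Real.cos_pi_div_four, Real.sin_pi_div_four] at h4
  -- h0 :  v^3 - 3 u v^2 + 2 u^2 v = 0, i.e. v (v-u)(v-2u) = 0
  have E0 : v * ((v - u) * (v - 2 * u)) = 0 := by ring_nf; ring_nf at h0; linarith
  have E2 : -(u ^ 3) - 3 * u ^ 2 * v - 2 * u * v ^ 2 = 1 := by ring_nf; ring_nf at h2; linarith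
  rcases mul_eq_zero.mp E0 with hv0 | h'
  · -- v = 0, then u^2 = 1 and u^3 = -1 so u = -1; contradict h4
    have hu2 : u ^ 2 = 1 := by rw [hv0] at huv; linarith
    have hu3 : u ^ 3 = -1 := by rw [hv0] at E2; linarith
    have huneg : u = -1 := by linear_combination hu3 - u * hu2
    rw [huneg, hv0] at h4
    have hs2 : Real.sqrt 2 ^ 2 = 2 := Real.sq_sqrt (by norm_num)
    have hs2pos : (0:ℝ) < Real.sqrt 2 := Real.sqrt_pos.mpr (by norm_num)
    have hz : Real.sqrt 2 * 3 = 0 := by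
      linear_combination (2 : ℝ) * h4 - (3 / 2 : ℝ) * Real.sqrt 2 * hs2
    linarith
  · rcases mul_eq_zero.mp h' with hvu | hv2u
    · -- v = u : 2u^2 = 1 and u^3 = -1/6
      have hveq : v = u := by linarith
      rw [hveq] at huv E2
      have e2 : u ^ 2 = 1 / 2 := by linarith
      have e1 : u ^ 3 = -(1/6) := by linear_combination (-1/6 : ℝ) * E2
      have h8 : u ^ 6 = 1 / 8 := by linear_combination (u ^ 4 + u ^ 2 / 2 + 1 / 4) * e2
      have h36 : u ^ 6 = 1 / 36 := by linear_combination (u ^ 3 - 1 / 6) * e1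
      linarith
    · -- v = 2u : 5u^2 = 1 and u^3 = -1/15
      have hveq : v = 2 * u := by linarith
      rw [hveq] at huv E2
      have e2 : u ^ 2 = 1 / 5 := by linarith [huv]
      have e1 : u ^ 3 = -(1/15) := by linear_combination (-1/15 : ℝ) * E2
      have h8 : u ^ 6 = 1 / 125 := by linear_combination (u ^ 4 + u ^ 2 / 5 + 1 / 25) * e2
      have h36 : u ^ 6 = 1 / 225 := by linear_combination (u ^ 3 - 1 / 15) * e1
      linarith
end

section
/- Under the hypotheses of Theorem 2 (q = c(x p_y − y p_x) with p homogeneous of degree k, H(x,y) = q(x,y) h(x²+y², p(x,y))), every solution ρ(θ) of dρ/dθ = c ρ^{k+1} h(ρ², ρ^k f(θ)) f'(θ) with sufficiently small initial value ρ(0) > 0 satisfies ρ(2π) = ρ(0); hence the origin is a center of ẋ = −y + x H(x,y), ẏ = x + y H(x,y). -/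
/-!
The right-hand side of the equation is `W (f θ, ρ) * f' θ` with
`W (t, R) = c R^(k+1) h(R², R^k t)`, so it depends on `θ` only through `f θ`. Hence, if `α` solves
`dα/dt = W (t, α)` on an interval containing the range of `f`, then `α ∘ f` solves the equation,
and by uniqueness `ρ = α ∘ f` once `ρ 0 = α (f 0)`; periodicity of `f` then gives
`ρ (2π) = α (f (2π)) = α (f 0) = ρ 0`. For `k ≥ 1`, `W` vanishes to second order in `R`, so by
Picard–Lindelöf such an `α` exists for every small enough initial value. For `k = 0`, `p` and hence
`f` are constant, so `ρ' = 0`.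
-/

open Real MvPolynomial Set Metric NNReal

theorem MvPolynomial.contDiff_eval {σ X : Type*} [NormedAddCommGroup X] [NormedSpace ℝ X]
    {n : WithTop ℕ∞} (P : MvPolynomial σ ℝ) {u : X → σ → ℝ} (hu : ∀ i, ContDiff ℝ n (u · i)) :
    ContDiff ℝ n fun x => eval (u x) P := by
  induction P using MvPolynomial.induction_on with
  | C a => simpa using contDiff_const
  | add p q hp hq => simpa using hp.add hq
  | mul_X p i hp => simpa using hp.mul (hu i)

theorem LipschitzOnWith.comp_prodMk_left {α β γ : Type*} [PseudoEMetricSpace α]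
    [PseudoEMetricSpace β] [PseudoEMetricSpace γ] {F : α × β → γ} {K : ℝ≥0} {s : Set α}
    {u : Set β} (hF : LipschitzOnWith K F (s ×ˢ u)) {a : α} (ha : a ∈ s) :
    LipschitzOnWith K (fun b => F (a, b)) u := by
  have := hF.comp (LipschitzWith.prodMk_left a).lipschitzOnWith fun _ hb => mk_mem_prod ha hb
  rwa [mul_one] at this

theorem eqOn_comp_of_hasDerivAt_mul_deriv {W : ℝ × ℝ → ℝ} (hW : ContDiff ℝ 1 W)
    {f α ρ : ℝ → ℝ} (hf : ContDiff ℝ 1 f) {a b : ℝ}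
    (hα : ∀ θ ∈ Icc a b, HasDerivAt α (W (f θ, α (f θ))) (f θ))
    (hρ : ∀ θ ∈ Icc a b, HasDerivAt ρ (W (f θ, ρ θ) * deriv f θ) θ)
    (ha : ρ a = α (f a)) : EqOn ρ (α ∘ f) (Icc a b) := by
  have hσ (θ : ℝ) (hθ : θ ∈ Icc a b) :
      HasDerivAt (α ∘ f) (W (f θ, (α ∘ f) θ) * deriv f θ) θ :=
    (hα θ hθ).comp θ (hf.differentiable one_ne_zero θ).hasDerivAt
  have hρc : ContinuousOn ρ (Icc a b) := fun θ hθ => (hρ θ hθ).continuousAt.continuousWithinAt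
  have hσc : ContinuousOn (α ∘ f) (Icc a b) := fun θ hθ =>
    (hσ θ hθ).continuousAt.continuousWithinAt
  set T := ρ '' Icc a b ∪ (α ∘ f) '' Icc a b
  obtain ⟨K, hK⟩ := hW.locallyLipschitz.locallyLipschitzOn.exists_lipschitzOnWith_of_compact
    ((isCompact_Icc.image hf.continuous).prod
      ((isCompact_Icc.image_of_continuousOn hρc).union (isCompact_Icc.image_of_continuousOn hσc)))
  obtain ⟨D, hD⟩ := isCompact_Icc.exists_bound_of_continuousOn (s := Icc a b)
    (hf.continuous_deriv le_rfl).continuousOn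
  have hv (t : ℝ) (ht : t ∈ Ico a b) :
      LipschitzOnWith (D.toNNReal * K) (fun R => W (f t, R) * deriv f t) T := by
    have hWt := (lipschitzWith_smul (deriv f t)).comp_lipschitzOnWith
      (hK.comp_prodMk_left (mem_image_of_mem f (Ico_subset_Icc_self ht)))
    have hnorm : ‖deriv f t‖₊ ≤ D.toNNReal := by
      rw [← norm_toNNReal]
      exact Real.toNNReal_le_toNNReal (hD t (Ico_subset_Icc_self ht))
    rw [show (fun R => W (f t, R) * deriv f t) = (deriv f t • ·) ∘ fun R => W (f t, R) from
      funext fun R => mul_comm _ _]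
    exact hWt.weaken (mul_le_mul_left hnorm K)
  exact ODE_solution_unique_of_mem_Icc_right hv hρc
    (fun t ht => (hρ t (Ico_subset_Icc_self ht)).hasDerivWithinAt)
    (fun t ht => Or.inl (mem_image_of_mem _ (Ico_subset_Icc_self ht))) hσc
    (fun t ht => (hσ t (Ico_subset_Icc_self ht)).hasDerivWithinAt)
    (fun t ht => Or.inr (mem_image_of_mem _ (Ico_subset_Icc_self ht))) ha

theorem exists_forall_abs_lt_exists_hasDerivAt_of_abs_le_mul_sq {W : ℝ × ℝ → ℝ}
    (hW : ContDiff ℝ 1 W) {a b : ℝ} {C : ℝ≥0}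
    (hC : ∀ t ∈ Icc a b, ∀ x ∈ Icc (-1 : ℝ) 1, |W (t, x)| ≤ C * x ^ 2) :
    ∃ ε > 0, ∀ x₀ : ℝ, |x₀| < ε → ∀ t₀ ∈ Icc a b,
      ∃ α : ℝ → ℝ, α t₀ = x₀ ∧ ∀ t ∈ Ioo a b, HasDerivAt α (W (t, α t)) t := by
  obtain ⟨K, hK⟩ := hW.locallyLipschitz.locallyLipschitzOn.exists_lipschitzOnWith_of_compact
    ((isCompact_Icc (a := a) (b := b)).prod (isCompact_Icc (a := (-1 : ℝ)) (b := 1)))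
  -- On the ball of radius `|x₀|` about `x₀` we have `|W| ≤ 4 C x₀²`, so Picard–Lindelöf gives a
  -- solution on any time interval of length at most `1 / (4 C |x₀|)`.
  refine ⟨1 / (2 + 4 * C * |b - a|), by positivity, fun x₀ hx₀ t₀ ht₀ => ?_⟩
  have hx₀' : |x₀| * (2 + 4 * C * |b - a|) < 1 :=
    (lt_div_iff₀ (by positivity)).mp (by simpa using hx₀)
  have hsmall : 2 * |x₀| ≤ 1 := by
    nlinarith [mul_nonneg (mul_nonneg (abs_nonneg x₀) C.coe_nonneg) (abs_nonneg (b - a))]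
  have hbound (x : ℝ) (hx : x ∈ closedBall x₀ ‖x₀‖₊) : |x| ≤ 2 * |x₀| := by
    rw [coe_nnnorm, mem_closedBall, Real.dist_eq, Real.norm_eq_abs] at hx
    linarith [abs_sub_abs_le_abs_sub x x₀]
  have hball : closedBall x₀ ‖x₀‖₊ ⊆ Icc (-1) 1 := fun x hx =>
    abs_le.mp ((hbound x hx).trans hsmall)
  have hpl : IsPicardLindelof (fun t x => W (t, x)) (⟨t₀, ht₀⟩ : Icc a b) x₀ ‖x₀‖₊ 0
      (4 * C * ‖x₀‖₊ ^ 2) K :=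
    { lipschitzOnWith := fun t ht => (hK.comp_prodMk_left ht).mono hball
      continuousOn := fun x _ =>
        (hW.continuous.comp (continuous_id.prodMk continuous_const)).continuousOn
      norm_le := fun t ht x hx => by
        push_cast
        calc ‖W (t, x)‖ ≤ C * x ^ 2 := hC t ht x (hball hx)
          _ ≤ C * (2 * |x₀|) ^ 2 := by
            rw [← sq_abs x]
            gcongr
            exact hbound x hx
          _ = 4 * C * ‖x₀‖ ^ 2 := by rw [Real.norm_eq_abs]; ring
      mul_max_le := by
        have hmax : max (b - t₀) (t₀ - a) ≤ |b - a| := by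
          have := le_abs_self (b - a)
          exact max_le (by linarith [ht₀.1]) (by linarith [ht₀.2])
        push_cast
        calc 4 * C * ‖x₀‖ ^ 2 * max (b - t₀) (t₀ - a) ≤ 4 * C * |x₀| ^ 2 * |b - a| := by
              simp only [Real.norm_eq_abs]; gcongr
          _ ≤ ‖x₀‖ - 0 := by simp only [Real.norm_eq_abs, sub_zero]; nlinarith [abs_nonneg x₀] }
  obtain ⟨α, hα₀, hα⟩ := hpl.exists_eq_forall_mem_Icc_hasDerivWithinAt₀
  exact ⟨α, hα₀, fun t ht => (hα t (Ioo_subset_Icc_self ht)).hasDerivAt (Icc_mem_nhds ht.1 ht.2)⟩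

theorem periodic_eval_cos_sin (p : MvPolynomial (Fin 2) ℝ) :
    Function.Periodic (fun θ => eval ![cos θ, sin θ] p) (2 * π) := by
  intro θ
  simp [cos_add_two_pi, sin_add_two_pi]

theorem contDiff_eval_cos_sin (p : MvPolynomial (Fin 2) ℝ) {n : WithTop ℕ∞} :
    ContDiff ℝ n (fun θ => eval ![cos θ, sin θ] p) := by
  refine p.contDiff_eval ?_
  simp only [Fin.forall_fin_two, Matrix.cons_val_zero, Matrix.cons_val_one]
  exact ⟨contDiff_cos, contDiff_sin⟩

noncomputable def reducedField (k : ℕ) (c : ℝ) (h : MvPolynomial (Fin 2) ℝ) (z : ℝ × ℝ) : ℝ :=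
  c * z.2 ^ (k + 1) * eval ![z.2 ^ 2, z.2 ^ k * z.1] h

theorem contDiff_reducedField (k : ℕ) (c : ℝ) (h : MvPolynomial (Fin 2) ℝ) {n : WithTop ℕ∞} :
    ContDiff ℝ n (reducedField k c h) := by
  refine (contDiff_const.mul (contDiff_snd.pow _)).mul (h.contDiff_eval ?_)
  simp only [Fin.forall_fin_two, Matrix.cons_val_zero, Matrix.cons_val_one]
  exact ⟨contDiff_snd.pow 2, (contDiff_snd.pow k).mul contDiff_fst⟩

theorem exists_abs_reducedField_le_mul_sq {k : ℕ} (hk : 1 ≤ k) (c : ℝ)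
    (h : MvPolynomial (Fin 2) ℝ) (B : ℝ) :
    ∃ C : ℝ≥0, ∀ t ∈ Icc (-B) B, ∀ x ∈ Icc (-1 : ℝ) 1, |reducedField k c h (t, x)| ≤ C * x ^ 2 := by
  obtain ⟨M, hM⟩ := (isCompact_closedBall (0 : Fin 2 → ℝ) (max 1 B)).exists_bound_of_continuousOn
    (continuous_eval h).continuousOn
  refine ⟨‖c‖₊ * M.toNNReal, fun t ht x hx => ?_⟩
  have hx1 : |x| ≤ 1 := abs_le.mpr hx
  have hmem : ![x ^ 2, x ^ k * t] ∈ closedBall 0 (max 1 B) := by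
    rw [mem_closedBall_zero_iff, pi_norm_le_iff_of_nonneg (by positivity), Fin.forall_fin_two]
    simp only [Matrix.cons_val_zero, Matrix.cons_val_one, Real.norm_eq_abs, abs_pow, abs_mul]
    constructor
    · exact (pow_le_one₀ (abs_nonneg x) hx1).trans (le_max_left _ _)
    · calc |x| ^ k * |t| ≤ 1 * B := by
            gcongr
            · exact pow_le_one₀ (abs_nonneg x) hx1
            · exact abs_le.mpr ht
        _ ≤ max 1 B := by simp
  have hpow : |x| ^ (k + 1) ≤ x ^ 2 := by
    rw [← sq_abs]
    exact pow_le_pow_of_le_one (abs_nonneg x) hx1 (by omega)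
  calc |reducedField k c h (t, x)| = |c| * |x| ^ (k + 1) * ‖eval ![x ^ 2, x ^ k * t] h‖ := by
        simp [reducedField, abs_mul, abs_pow]
    _ ≤ |c| * x ^ 2 * max M 0 := by
        gcongr
        exact (hM _ hmem).trans (le_max_left _ _)
    _ = ‖c‖₊ * M.toNNReal * x ^ 2 := by simp [Real.coe_toNNReal']; ring

/-- Theorem 2: every solution of the reduced equation
`dρ/dθ = c ρ^{k+1} h(ρ², ρ^k f(θ)) f'(θ)`, `f(θ) = p(cos θ, sin θ)`,
with sufficiently small positive initial value satisfies `ρ(2π) = ρ(0)`;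
hence the origin is a center. -/
theorem stmt16 (k : ℕ) (c : ℝ)
    (p : MvPolynomial (Fin 2) ℝ) (hp : p.IsHomogeneous k)
    (h : MvPolynomial (Fin 2) ℝ)
    (f : ℝ → ℝ) (hf : ∀ θ, f θ = eval ![cos θ, sin θ] p) :
    ∃ ε > 0, ∀ ρ₀ : ℝ, 0 < ρ₀ → ρ₀ < ε →
      ∀ ρ : ℝ → ℝ, ρ 0 = ρ₀ →
        (∀ θ ∈ Set.Icc (0:ℝ) (2 * π),
          HasDerivAt ρ
            (c * ρ θ ^ (k + 1) * eval ![ρ θ ^ 2, ρ θ ^ k * f θ] h * deriv f θ) θ) →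
        ρ (2 * π) = ρ 0 := by
  have hfe : f = fun θ => eval ![cos θ, sin θ] p := funext hf
  have hper : Function.Periodic f (2 * π) := hfe ▸ periodic_eval_cos_sin p
  have hfc : ContDiff ℝ 1 f := hfe ▸ contDiff_eval_cos_sin p
  have h2π : 2 * π ∈ Icc 0 (2 * π) := right_mem_Icc.mpr two_pi_pos.le
  rcases Nat.eq_zero_or_pos k with rfl | hk
  · have hp0 : p = C (p.coeff 0) :=
      totalDegree_eq_zero_iff_eq_C.mp ((totalDegree_zero_iff_isHomogeneous _).mpr hp)
    have hf' (θ : ℝ) : deriv f θ = 0 := by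
      rw [hfe, hp0]
      simp
    refine ⟨1, one_pos, fun ρ₀ _ _ ρ _ hρ => ?_⟩
    simp only [hf', mul_zero] at hρ
    exact constant_of_has_deriv_right_zero
      (fun θ hθ => (hρ θ hθ).continuousAt.continuousWithinAt)
      (fun θ hθ => (hρ θ (Ico_subset_Icc_self hθ)).hasDerivWithinAt) _ h2π
  · obtain ⟨B, hB⟩ := isBounded_iff_forall_norm_le.mp
      (hper.isBounded_of_continuous two_pi_pos.ne' hfc.continuous)
    have hfB (θ : ℝ) : f θ ∈ Ioo (-(B + 1)) (B + 1) :=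
      abs_lt.mp ((hB _ (mem_range_self θ)).trans_lt (lt_add_one B))
    obtain ⟨C, hC⟩ := exists_abs_reducedField_le_mul_sq hk c h (B + 1)
    obtain ⟨ε, hε, hsol⟩ :=
      exists_forall_abs_lt_exists_hasDerivAt_of_abs_le_mul_sq (contDiff_reducedField k c h) hC
    refine ⟨ε, hε, fun ρ₀ hρ₀ hρ₀ε ρ hρ0 hρ => ?_⟩
    obtain ⟨α, hα0, hα⟩ := hsol ρ₀ (by rwa [abs_of_pos hρ₀]) _ (Ioo_subset_Icc_self (hfB 0))
    have hρα := eqOn_comp_of_hasDerivAt_mul_deriv (contDiff_reducedField k c h) hfc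
      (fun θ _ => hα _ (hfB θ)) hρ (hρ0.trans hα0.symm)
    rw [hρα h2π, Function.comp_apply, ← zero_add (2 * π), hper 0, hα0, hρ0]
end
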